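/- Sequential composition of parameterized functors is stable under equivalence: if f ≈_α f̂ : 𝒜 → ℬ (via an isomorphism α of parameter categories) and g ≈_β ĝ : ℬ → 𝒞 (via β), then f;g ≈_{α×β} f̂;ĝ : 𝒜 → 𝒞, i.e. the composites are equivalent via the product isomorphism α × β. -/

import Mathlib

open CategoryTheory

universe w₁ w₂ w₃ w₄ v₁ v₂ v₃ u₁ u₂ u₃

/-- A parameterized functor (p-functor) from `S` to `T`: a category `P` of parameters
together with a functor `P ⥤ Fun(S, T)`. -/
structure ParFunctor (S : Type u₁) [Category.{v₁} S] (T : Type u₂) [Category.{v₂} T] where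
  /-- the category of parameters -/
  P : Type w₁
  [instP : Category.{w₂} P]
  /-- the underlying functor into the functor category -/
  F : P ⥤ S ⥤ T

attribute [instance] ParFunctor.instP

/-- A (strict) isomorphism of categories. -/
structure CatIso (A : Type u₁) (B : Type u₂) [Category.{v₁} A] [Category.{v₂} B] where
  hom : A ⥤ B
  inv : B ⥤ A
  hom_inv_id : hom ⋙ inv = 𝟭 A
  inv_hom_id : inv ⋙ hom = 𝟭 B

namespace CatIso

/-- The identity isomorphism of categories. -/
def refl (A : Type u₁) [Category.{v₁} A] : CatIso A A where
  hom := 𝟭 A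
  inv := 𝟭 A
  hom_inv_id := rfl
  inv_hom_id := rfl

/-- Product of isomorphisms of categories. -/
def prod {A : Type u₁} [Category.{v₁} A] {B : Type u₂} [Category.{v₂} B]
    {C : Type u₃} [Category.{v₃} C] {D : Type w₃} [Category.{w₄} D]
    (ι : CatIso A B) (κ : CatIso C D) : CatIso (A × C) (B × D) where
  hom := ι.hom.prod κ.hom
  inv := ι.inv.prod κ.inv
  hom_inv_id := by
    rw [show ι.hom.prod κ.hom ⋙ ι.inv.prod κ.inv
        = (ι.hom ⋙ ι.inv).prod (κ.hom ⋙ κ.inv) from rfl, ι.hom_inv_id, κ.hom_inv_id]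
    rfl
  inv_hom_id := by
    rw [show ι.inv.prod κ.inv ⋙ ι.hom.prod κ.hom
        = (ι.inv ⋙ ι.hom).prod (κ.inv ⋙ κ.hom) from rfl, ι.inv_hom_id, κ.inv_hom_id]
    rfl

end CatIso

namespace ParFunctor

section Seq

variable {A : Type u₁} [Category.{v₁} A] {B : Type u₂} [Category.{v₂} B]
  {C : Type u₃} [Category.{v₃} C]

/-- Sequential composition of p-functors: parameter category `𝒫 × 𝒬`,
`(f;g)_{(p,q)} = f_p ⋙ g_q` on objects and the Godement product on parameter arrows. -/
def seq (f : ParFunctor A B) (g : ParFunctor B C) : ParFunctor A C where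
  P := f.P × g.P
  F :=
    { obj := fun pq => f.F.obj pq.1 ⋙ g.F.obj pq.2
      map := fun eh => f.F.map eh.1 ◫ g.F.map eh.2
      map_id := by
        intro pq
        ext X
        simp [NatTrans.hcomp]
      map_comp := by
        intro pq pq' pq'' eh eh'
        dsimp
        rw [Functor.map_comp, Functor.map_comp, NatTrans.exchange] }

end Seq

/-- The identity p-functor: terminal parameter category, constantly the identity functor. -/
def idP (A : Type u₁) [Category.{v₁} A] : ParFunctor A A where
  P := Discrete PUnit.{w₁ + 1}
  F := (Functor.const _).obj (𝟭 A)

variable {S : Type u₁} [Category.{v₁} S] {T : Type u₂} [Category.{v₂} T]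

/-- Equivalence of p-functors via a given isomorphism `α` of the parameter categories:
`f` and `α ⋙ f'` are naturally isomorphic. -/
def EquivVia (f f' : ParFunctor S T) (α : CatIso f.P f'.P) : Prop :=
  Nonempty (f.F ≅ α.hom ⋙ f'.F)

/-- Equivalence of p-functors: some isomorphism of the parameter categories identifies
them up to natural isomorphism. -/
def Equiv (f f' : ParFunctor S T) : Prop :=
  ∃ α : CatIso f.P f'.P, EquivVia f f' α

end ParFunctor

namespace ParFunctor

variable {A : Type u₁} [Category.{v₁} A] {B : Type u₂} [Category.{v₂} B]
  {C : Type u₃} [Category.{v₃} C]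

/-- `uncurry.obj (whiskeringLeft A B C)` is composition `(F, G) ↦ F ⋙ G`; it acts on arrows by
the Godement product in whiskered form, so the components of this isomorphism are identities. -/
def seqFIsoProdComp (f : ParFunctor A B) (g : ParFunctor B C) :
    (f.seq g).F ≅ f.F.prod g.F ⋙ Functor.uncurry.obj (Functor.whiskeringLeft A B C) :=
  NatIso.ofComponents (fun _ => Iso.refl _) fun eh =>
    (Category.comp_id _).trans <|
      (Functor.NatTrans.hcomp_eq_whiskerRight_comp_whiskerLeft (f.F.map eh.1) (g.F.map eh.2)).trans
        (Category.id_comp _).symm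

end ParFunctor

/-- **Statement 13.** Sequential composition of parameterized functors is stable under
equivalence: if `f ≈_α f̂` and `g ≈_β ĝ`, then `f;g ≈_{α×β} f̂;ĝ`, i.e. the composites
are equivalent via the product isomorphism `α × β` of the parameter categories. -/
theorem ParFunctor.seq_equivVia
    {A : Type u₁} [Category.{v₁} A] {B : Type u₂} [Category.{v₂} B]
    {C : Type u₃} [Category.{v₃} C]
    (f f' : ParFunctor A B) (g g' : ParFunctor B C)
    (α : CatIso f.P f'.P) (β : CatIso g.P g'.P)
    (hf : f.EquivVia f' α) (hg : g.EquivVia g' β) :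
    (f.seq g).EquivVia (f'.seq g') (α.prod β) := by
  obtain ⟨φ⟩ := hf
  obtain ⟨ψ⟩ := hg
  exact ⟨seqFIsoProdComp f g ≪≫ Functor.isoWhiskerRight (NatIso.prod φ ψ) _ ≪≫
    Functor.isoWhiskerLeft (α.prod β).hom (seqFIsoProdComp f' g').symm⟩
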